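/- arXiv:1010.2561 — 3 statements merged into one kernel-verified Lean document; each statement's English description precedes it below -/
import Mathlib

section
/- Let l be an odd prime and f ≥ 1 an integer. Suppose c_0, …, c_{f-1} and b are integers with (1-l)/2 < c_i < (l-1)/2 for all i and (1-l)/2 < b < (l-1)/2, and suppose that Σ_{i=0}^{f-1} c_i l^i ≡ b·(l^f - 1)/(l - 1) (mod l^f - 1). Then c_i = b for all i = 0, …, f-1. -/
lemma digits_zero (l : ℤ) (hl : 3 ≤ l) : ∀ f : ℕ, ∀ d : ℕ → ℤ,
    (∀ i < f, |d i| ≤ l - 3) → (∑ i ∈ Finset.range f, d i * l ^ i) = 0 →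
    ∀ i < f, d i = 0 := by
  intro f
  induction f with
  | zero => intro d _ _ i hi; omega
  | succ n ih =>
    intro d hd hsum i hi
    rw [Finset.sum_range_succ'] at hsum
    have hrw : (∑ i ∈ Finset.range n, d (i + 1) * l ^ (i + 1)) =
        l * ∑ i ∈ Finset.range n, d (i + 1) * l ^ i := by
      rw [Finset.mul_sum]
      exact Finset.sum_congr rfl fun j _ => by ring
    rw [hrw] at hsum
    simp only [pow_zero, mul_one] at hsum
    have h0 : d 0 = 0 := by
      have hdvd : l ∣ d 0 :=
        ⟨-(∑ i ∈ Finset.range n, d (i + 1) * l ^ i), by linear_combination hsum⟩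
      exact Int.eq_zero_of_abs_lt_dvd hdvd
        (lt_of_le_of_lt (hd 0 (Nat.succ_pos n)) (by omega))
    have hT : (∑ i ∈ Finset.range n, d (i + 1) * l ^ i) = 0 := by
      have hl0 : l ≠ 0 := by omega
      have : l * (∑ i ∈ Finset.range n, d (i + 1) * l ^ i) = 0 := by linarith
      exact (mul_eq_zero.1 this).resolve_left hl0
    rcases i with _ | j
    · exact h0
    · exact ih (fun i => d (i + 1)) (fun i hi => hd (i + 1) (by omega)) hT j (by omega)

/-- The base-`l` digit argument: if the digits `c i` and `b` all lie strictly between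
`(1-l)/2` and `(l-1)/2`, and `∑ cᵢ lⁱ ≡ b·(1 + l + ⋯ + l^{f-1}) (mod l^f - 1)`,
then `cᵢ = b` for all `i`. -/
theorem stmt_0 (l : ℕ) (hl : l.Prime) (hlodd : Odd l) (f : ℕ) (hf : 1 ≤ f)
    (c : ℕ → ℤ) (b : ℤ)
    (hc : ∀ i < f, (1 - (l : ℤ)) / 2 < c i ∧ c i < ((l : ℤ) - 1) / 2)
    (hb : (1 - (l : ℤ)) / 2 < b ∧ b < ((l : ℤ) - 1) / 2)
    (hcong : (∑ i ∈ Finset.range f, c i * (l : ℤ) ^ i) ≡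
      b * (∑ i ∈ Finset.range f, (l : ℤ) ^ i) [ZMOD ((l : ℤ) ^ f - 1)]) :
    ∀ i < f, c i = b := by
  obtain ⟨k, hk⟩ := hlodd
  have hl3 : 3 ≤ (l : ℤ) := by
    have h2 := hl.two_le
    have : l ≠ 2 := by rintro rfl; omega
    have : 3 ≤ l := by omega
    exact_mod_cast this
  have hkz : (l : ℤ) = 2 * (k : ℤ) + 1 := by exact_mod_cast hk
  set L : ℤ := (l : ℤ)
  set d : ℕ → ℤ := fun i => c i - b with hd
  have hdbd : ∀ i < f, |d i| ≤ L - 3 := by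
    intro i hi
    have h1 := hc i hi
    have h2 := hb
    simp only [hd]
    rw [abs_le]
    omega
  -- divisibility of the difference sum
  have hdvd : (L ^ f - 1) ∣ ∑ i ∈ Finset.range f, d i * L ^ i := by
    have h := (Int.ModEq.dvd hcong)
    have hrw : b * (∑ i ∈ Finset.range f, L ^ i) - (∑ i ∈ Finset.range f, c i * L ^ i)
        = -∑ i ∈ Finset.range f, d i * L ^ i := by
      rw [Finset.mul_sum, ← Finset.sum_sub_distrib, ← Finset.sum_neg_distrib]
      exact Finset.sum_congr rfl fun j _ => by simp [hd]; ring
    rw [hrw] at h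
    exact (dvd_neg.mp h)
  -- bound
  have hG1 : (1 : ℤ) ≤ ∑ i ∈ Finset.range f, L ^ i := by
    calc (1 : ℤ) = ∑ i ∈ Finset.range 1, L ^ i := by simp
    _ ≤ ∑ i ∈ Finset.range f, L ^ i := by
        apply Finset.sum_le_sum_of_subset_of_nonneg
        · exact Finset.range_subset_range.2 hf
        · intro i _ _; positivity
  have hgeom : (∑ i ∈ Finset.range f, L ^ i) * (L - 1) = L ^ f - 1 := geom_sum_mul L f
  have habs : |∑ i ∈ Finset.range f, d i * L ^ i| < L ^ f - 1 := by
    calc |∑ i ∈ Finset.range f, d i * L ^ i| ≤ ∑ i ∈ Finset.range f, |d i * L ^ i| :=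
          Finset.abs_sum_le_sum_abs _ _
      _ ≤ ∑ i ∈ Finset.range f, (L - 3) * L ^ i := by
          apply Finset.sum_le_sum
          intro i hi
          rw [abs_mul, abs_pow, abs_of_nonneg (by omega : (0:ℤ) ≤ L)]
          exact mul_le_mul_of_nonneg_right (hdbd i (Finset.mem_range.1 hi)) (by positivity)
      _ = (L - 3) * ∑ i ∈ Finset.range f, L ^ i := by rw [Finset.mul_sum]
      _ < (L - 1) * ∑ i ∈ Finset.range f, L ^ i := by
          apply mul_lt_mul_of_pos_right (by omega) (by omega)
      _ = L ^ f - 1 := by rw [mul_comm]; exact hgeom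
  have hsum0 : (∑ i ∈ Finset.range f, d i * L ^ i) = 0 :=
    Int.eq_zero_of_abs_lt_dvd hdvd habs
  intro i hi
  have := digits_zero L hl3 f d hdbd hsum0 i hi
  simp only [hd] at this
  omega
end

section
/- Let k be a field, m and n positive integers, A a commutative k-algebra, and X ∈ M_n(A) a matrix with X^m = 1. Let f(T) = ∏_{(ζ₁,…,ζ_n) ∈ μ_m(k̄)^n} (T − (ζ₁ + … + ζ_n)), a polynomial which lies in k[T] (being stable under Gal(k̄/k)). Then f(tr X) is nilpotent in A. Equivalently, f(tr X) lies in every prime ideal of A. -/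
/-!
Over an algebraically closed field a matrix with `Y ^ m = 1` has `m`-th roots of unity as the
roots of its characteristic polynomial, so its trace is a sum of `n` such roots; these lift to
`k̄`, hence `tr Y` is a root of `f`. For a prime `P` of `A`, apply this to the image of `X` under
`A → AlgebraicClosure P.ResidueField`, a `k`-algebra map whose kernel is `P`.
-/

open Polynomial

theorem Multiset.exists_fin_map_eq {α : Type*} (s : Multiset α) {n : ℕ} (hs : s.card = n) :
    ∃ g : Fin n → α, Finset.univ.val.map g = s := by
  subst hs
  refine ⟨fun i => s.toList[i.cast (Multiset.length_toList s).symm], ?_⟩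
  conv_rhs => rw [← Multiset.coe_toList s, ← List.ofFn_getElem (xs := s.toList)]
  rw [Fin.univ_val_map]
  congr 1
  exact (List.ofFn_congr (Multiset.length_toList s) _).symm

theorem Matrix.pow_eq_one_of_isRoot_charpoly {K ι : Type*} [Field K] [Fintype ι] [DecidableEq ι]
    {Y : Matrix ι ι K} {m : ℕ} (hY : Y ^ m = 1) {r : K} (hr : Y.charpoly.IsRoot r) :
    r ^ m = 1 := by
  have hspec := spectrum.pow_mem_pow Y m (Matrix.mem_spectrum_iff_isRoot_charpoly.2 hr)
  rw [hY, spectrum.mem_iff, ← map_one (algebraMap K _), ← map_sub] at hspec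
  by_contra h
  exact hspec ((sub_ne_zero.2 h).isUnit.map _)

theorem Matrix.exists_trace_eq_sum_of_pow_eq_one {K : Type*} [Field K] [IsAlgClosed K] {n m : ℕ}
    {Y : Matrix (Fin n) (Fin n) K} (hY : Y ^ m = 1) :
    ∃ ζ : Fin n → K, (∀ i, ζ i ^ m = 1) ∧ Y.trace = ∑ i, ζ i := by
  have hcard : Y.charpoly.roots.card = n := by
    rw [(IsAlgClosed.splits Y.charpoly).natDegree_eq_card_roots.symm,
      Matrix.charpoly_natDegree_eq_dim, Fintype.card_fin]
  obtain ⟨ζ, hζ⟩ := Y.charpoly.roots.exists_fin_map_eq hcard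
  refine ⟨ζ, fun i => Y.pow_eq_one_of_isRoot_charpoly hY (isRoot_of_mem_roots ?_), ?_⟩
  · exact hζ ▸ Multiset.mem_map_of_mem ζ (Finset.mem_univ i)
  · rw [Y.trace_eq_sum_roots_charpoly, ← hζ, Finset.sum_eq_multiset_sum]

theorem Polynomial.exists_mem_nthRootsFinset_one_map_eq {L K : Type*} [Field L] [IsAlgClosed L]
    [CommRing K] [IsDomain K] (ι : L →+* K) {m : ℕ} (hm : 0 < m) {ζ : K} (hζ : ζ ^ m = 1) :
    ∃ α ∈ nthRootsFinset m (1 : L), ι α = ζ := by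
  have hroot : ((X ^ m - C 1 : L[X]).map ι).IsRoot ζ := by simp [hζ]
  obtain ⟨α, rfl⟩ :=
    (IsAlgClosed.splits _).mem_range_of_isRoot (X_pow_sub_C_ne_zero hm 1) hroot
  refine ⟨α, (mem_nthRootsFinset hm 1).2 (ι.injective ?_), rfl⟩
  rw [map_pow, hζ, map_one]

section

variable {k : Type*} [Field k] {m n : ℕ} {f : k[X]}
  (hf : f.map (algebraMap k (AlgebraicClosure k)) =
    ∏ v : Fin n → nthRootsFinset m (1 : AlgebraicClosure k),
      (X - C (∑ i : Fin n, (v i : AlgebraicClosure k))))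
include hf

theorem aeval_sum_eq_zero_of_pow_eq_one {K : Type*} [Field K] [IsAlgClosed K] [Algebra k K]
    (hm : 0 < m) {ζ : Fin n → K} (hζ : ∀ i, ζ i ^ m = 1) : aeval (∑ i, ζ i) f = 0 := by
  let ι : AlgebraicClosure k →ₐ[k] K := IsAlgClosed.lift
  choose α hα hια using fun i =>
    exists_mem_nthRootsFinset_one_map_eq (ι : AlgebraicClosure k →+* K) hm (hζ i)
  have hmap : f.map (algebraMap k K) = (f.map (algebraMap k (AlgebraicClosure k))).map ι := by
    rw [map_map, ι.comp_algebraMap]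
  rw [aeval_def, ← eval_map, hmap, hf, Polynomial.map_prod, eval_prod]
  refine Finset.prod_eq_zero (Finset.mem_univ fun i => ⟨α i, hα i⟩) ?_
  rw [Polynomial.map_sub, map_X, map_C, map_sum, eval_sub, eval_X, eval_C]
  simp only [hια, sub_self]

theorem aeval_trace_eq_zero_of_pow_eq_one {K : Type*} [Field K] [IsAlgClosed K] [Algebra k K]
    (hm : 0 < m) {Y : Matrix (Fin n) (Fin n) K} (hY : Y ^ m = 1) : aeval Y.trace f = 0 := by
  obtain ⟨ζ, hζ, htr⟩ := Y.exists_trace_eq_sum_of_pow_eq_one hY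
  rw [htr]
  exact aeval_sum_eq_zero_of_pow_eq_one hf hm hζ

end

theorem stmt_12_general (k : Type*) [Field k] (m n : ℕ) (hm : 0 < m)
    (A : Type*) [CommRing A] [Algebra k A]
    (X : Matrix (Fin n) (Fin n) A) (hX : X ^ m = 1)
    (f : Polynomial k)
    (hf : f.map (algebraMap k (AlgebraicClosure k)) =
      ∏ v : Fin n → (Polynomial.nthRootsFinset m (1 : AlgebraicClosure k)),
        (Polynomial.X - Polynomial.C (∑ i : Fin n, ((v i : AlgebraicClosure k))))) :
    IsNilpotent (Polynomial.aeval (Matrix.trace X) f) ∧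
      ∀ P : Ideal A, P.IsPrime → Polynomial.aeval (Matrix.trace X) f ∈ P := by
  have hprime (P : Ideal A) (_ : P.IsPrime) : aeval X.trace f ∈ P := by
    let φ := IsScalarTower.toAlgHom k A (AlgebraicClosure P.ResidueField)
    have hφ : φ (aeval X.trace f) = 0 := by
      rw [← aeval_algHom_apply, AddMonoidHom.map_trace]
      exact aeval_trace_eq_zero_of_pow_eq_one hf hm
        (show φ.mapMatrix X ^ m = 1 by rw [← map_pow, hX, map_one])
    rw [IsScalarTower.toAlgHom_apply, IsScalarTower.algebraMap_apply A P.ResidueField,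
      map_eq_zero_iff _ (RingHom.injective _)] at hφ
    rwa [← Ideal.ker_algebraMap_residueField P, RingHom.mem_ker]
  exact ⟨nilpotent_iff_mem_prime.2 hprime, hprime⟩

/-- Let `k` be a field, `A` a commutative `k`-algebra and `X ∈ M_n(A)` with
`X^m = 1`. If `f ∈ k[T]` is the polynomial whose image over the algebraic
closure `k̄` is `∏_{(ζ₁,…,ζ_n) ∈ μ_m(k̄)^n} (T − (ζ₁ + ⋯ + ζ_n))`, then
`f(tr X)` is nilpotent in `A` (equivalently, lies in every prime ideal of `A`). -/
theorem stmt_12 (k : Type*) [Field k] (m n : ℕ) (hm : 0 < m) (hn : 0 < n)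
    (A : Type*) [CommRing A] [Algebra k A]
    (X : Matrix (Fin n) (Fin n) A) (hX : X ^ m = 1)
    (f : Polynomial k)
    (hf : f.map (algebraMap k (AlgebraicClosure k)) =
      ∏ v : Fin n → (Polynomial.nthRootsFinset m (1 : AlgebraicClosure k)),
        (Polynomial.X - Polynomial.C (∑ i : Fin n, ((v i : AlgebraicClosure k))))) :
    IsNilpotent (Polynomial.aeval (Matrix.trace X) f) ∧
      ∀ P : Ideal A, P.IsPrime → Polynomial.aeval (Matrix.trace X) f ∈ P :=
  stmt_12_general k m n hm A X hX f hf
end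

section
/- Let Γ be a group with a normal subgroup Δ of index 2, fix γ₀ ∈ Γ \ Δ, let A be a commutative ring, and let χ: Δ → A^× and μ: Γ → A^× be homomorphisms satisfying: (i) χ(δ)·χ(γ₀δγ₀^{-1}) = μ(δ) for all δ ∈ Δ, and (ii) χ(γ₀²) = −μ(γ₀). Let 𝒢₁ = (GL₁ × GL₁) ⋊ {1, ȷ}, so that 𝒢₁(A) consists of the pairs (x, a) ∈ A^× × A^× with componentwise multiplication together with an element ȷ satisfying ȷ·(x, a)·ȷ^{-1} = (a·x^{-1}, a) and ȷ² = (1, 1). Then the map sending δ ∈ Δ to (χ(δ), μ(δ)) and γ ∈ Γ \ Δ to (χ(γγ₀^{-1}), −μ(γ))·ȷ is a group homomorphism Γ → 𝒢₁(A). -/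
/-- The group `𝒢₁(A) = (GL₁ × GL₁) ⋊ {1, ȷ}`, with `ȷ·(x,a)·ȷ⁻¹ = (a·x⁻¹, a)`
and `ȷ² = 1`. An element is a triple `(x, a, j)` with `j : Bool` recording
whether the `ȷ`-component is present. -/
@[ext]
structure GOne (A : Type*) [CommRing A] where
  x : Aˣ
  a : Aˣ
  j : Bool

namespace GOne

variable {A : Type*} [CommRing A]

instance : Mul (GOne A) :=
  ⟨fun p q => ⟨p.x * (if p.j then q.a * q.x⁻¹ else q.x), p.a * q.a, xor p.j q.j⟩⟩

instance : One (GOne A) := ⟨⟨1, 1, false⟩⟩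

instance : Inv (GOne A) :=
  ⟨fun p => ⟨if p.j then p.a⁻¹ * p.x else p.x⁻¹, p.a⁻¹, p.j⟩⟩

@[simp] lemma mul_def (p q : GOne A) :
    p * q = ⟨p.x * (if p.j then q.a * q.x⁻¹ else q.x), p.a * q.a, xor p.j q.j⟩ := rfl

@[simp] lemma one_def : (1 : GOne A) = ⟨1, 1, false⟩ := rfl

@[simp] lemma inv_def (p : GOne A) :
    p⁻¹ = ⟨if p.j then p.a⁻¹ * p.x else p.x⁻¹, p.a⁻¹, p.j⟩ := rfl

instance : Group (GOne A) where
  mul_assoc := by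
    rintro ⟨x, a, s⟩ ⟨y, b, t⟩ ⟨z, c, u⟩
    cases s <;> cases t <;> cases u <;>
      simp [mul_def, mul_assoc, mul_comm, mul_left_comm, mul_inv_rev]
  one_mul := by rintro ⟨x, a, s⟩; cases s <;> simp
  mul_one := by rintro ⟨x, a, s⟩; cases s <;> simp
  inv_mul_cancel := by
    rintro ⟨x, a, s⟩
    cases s <;> simp [mul_def, mul_assoc, mul_comm, mul_left_comm]

end GOne

/-- Section 1.1 of BLGGT: given `Δ ≤ Γ` of index 2 (hence normal), `γ₀ ∉ Δ`, and
characters `χ : Δ → A^×`, `μ : Γ → A^×` with `χ(δ)·χ(γ₀δγ₀⁻¹) = μ(δ)` and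
`χ(γ₀²) = -μ(γ₀)`, the map sending `δ ∈ Δ` to `(χ(δ), μ(δ))` and
`γ ∈ Γ \ Δ` to `(χ(γγ₀⁻¹), -μ(γ))·ȷ` is a group homomorphism `Γ → 𝒢₁(A)`. -/
theorem stmt_14 (A : Type*) [CommRing A] (Γ : Type*) [Group Γ]
    (Δ : Subgroup Γ) (hnorm : Δ.Normal) (hindex : Δ.index = 2)
    (γ₀ : Γ) (hγ₀ : γ₀ ∉ Δ)
    (χ : Δ →* Aˣ) (μ : Γ →* Aˣ)
    (h1 : ∀ δ : Δ, χ δ * χ ⟨γ₀ * (δ : Γ) * γ₀⁻¹, hnorm.conj_mem (δ : Γ) δ.2 γ₀⟩ = μ (δ : Γ))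
    (hsq : γ₀ * γ₀ ∈ Δ)
    (h2 : χ ⟨γ₀ * γ₀, hsq⟩ = -μ γ₀) :
    ∃ F : Γ →* GOne A,
      (∀ (δ : Γ) (hδ : δ ∈ Δ), F δ = ⟨χ ⟨δ, hδ⟩, μ δ, false⟩) ∧
      (∀ (γ : Γ), γ ∉ Δ → ∀ (hγ : γ * γ₀⁻¹ ∈ Δ),
        F γ = ⟨χ ⟨γ * γ₀⁻¹, hγ⟩, -μ γ, true⟩) := by
  classical
  have key : ∀ (a b c : Γ) (ha : a ∈ Δ) (hb : b ∈ Δ) (hc : c ∈ Δ), c = a * b →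
      χ ⟨c, hc⟩ = χ ⟨a, ha⟩ * χ ⟨b, hb⟩ := by
    intro a b c ha hb hc hcab
    subst hcab
    exact map_mul χ ⟨a, ha⟩ ⟨b, hb⟩
  have hmem : ∀ γ : Γ, γ ∉ Δ → γ * γ₀⁻¹ ∈ Δ := by
    intro γ hγ
    rw [Subgroup.mul_mem_iff_of_index_two hindex]
    simp [hγ, hγ₀]
  set f : Γ → GOne A := fun γ =>
    if h : γ ∈ Δ then ⟨χ ⟨γ, h⟩, μ γ, false⟩
    else ⟨χ ⟨γ * γ₀⁻¹, hmem γ h⟩, -μ γ, true⟩ with hf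
  have hmul : ∀ g₁ g₂ : Γ, f (g₁ * g₂) = f g₁ * f g₂ := by
    intro g₁ g₂
    by_cases h1' : g₁ ∈ Δ <;> by_cases h2' : g₂ ∈ Δ
    · have h12 : g₁ * g₂ ∈ Δ := mul_mem h1' h2'
      simp only [hf, dif_pos h1', dif_pos h2', dif_pos h12, GOne.mul_def]
      ext <;> simp [key g₁ g₂ _ h1' h2' h12 rfl]
    · have h12 : g₁ * g₂ ∉ Δ := fun h => h2' (by
        have := mul_mem (inv_mem h1') h; simpa [mul_assoc] using this)
      simp only [hf, dif_pos h1', dif_neg h2', dif_neg h12, GOne.mul_def]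
      have hx := key g₁ (g₂ * γ₀⁻¹) (g₁ * g₂ * γ₀⁻¹) h1' (hmem _ h2') (hmem _ h12)
        (by group)
      ext <;> simp [hx]
    · have h12 : g₁ * g₂ ∉ Δ := fun h => h1' (by
        have := mul_mem h (inv_mem h2'); simpa [mul_assoc] using this)
      simp only [hf, dif_neg h1', dif_pos h2', dif_neg h12, GOne.mul_def]
      have hconj : γ₀ * g₂ * γ₀⁻¹ ∈ Δ := hnorm.conj_mem _ h2' γ₀
      have hx := key (g₁ * γ₀⁻¹) (γ₀ * g₂ * γ₀⁻¹) (g₁ * g₂ * γ₀⁻¹) (hmem _ h1') hconj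
        (hmem _ h12) (by group)
      have hmu : χ ⟨g₂, h2'⟩ * χ ⟨γ₀ * g₂ * γ₀⁻¹, hconj⟩ = μ g₂ := h1 ⟨g₂, h2'⟩
      refine GOne.ext ?_ ?_ ?_
      · show χ ⟨g₁ * g₂ * γ₀⁻¹, hmem _ h12⟩
            = χ ⟨g₁ * γ₀⁻¹, hmem _ h1'⟩ * (μ g₂ * (χ ⟨g₂, h2'⟩)⁻¹)
        rw [hx, ← hmu]
        simp [mul_comm, mul_left_comm, mul_assoc]
      · show (-μ (g₁ * g₂) : Aˣ) = -μ g₁ * μ g₂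
        rw [map_mul]
        exact (neg_mul _ _).symm
      · simp
    · have h12 : g₁ * g₂ ∈ Δ := by
        rw [Subgroup.mul_mem_iff_of_index_two hindex]; simp [h1', h2']
      simp only [hf, dif_neg h1', dif_neg h2', dif_pos h12, GOne.mul_def]
      have hconj : γ₀ * (g₂ * γ₀⁻¹) * γ₀⁻¹ ∈ Δ := hnorm.conj_mem _ (hmem _ h2') γ₀
      have hx1 := key (g₁ * γ₀⁻¹) (γ₀ * (g₂ * γ₀⁻¹) * γ₀⁻¹ * (γ₀ * γ₀)) (g₁ * g₂)
        (hmem _ h1') (mul_mem hconj hsq) h12 (by group)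
      have hx2 := key (γ₀ * (g₂ * γ₀⁻¹) * γ₀⁻¹) (γ₀ * γ₀) _ hconj hsq
        (mul_mem hconj hsq) rfl
      have hmu : χ ⟨g₂ * γ₀⁻¹, hmem _ h2'⟩ * χ ⟨γ₀ * (g₂ * γ₀⁻¹) * γ₀⁻¹, hconj⟩
          = μ (g₂ * γ₀⁻¹) := h1 ⟨g₂ * γ₀⁻¹, hmem _ h2'⟩
      have hμ₂ : μ g₂ = μ (g₂ * γ₀⁻¹) * μ γ₀ := by rw [← map_mul]; group
      refine GOne.ext ?_ ?_ ?_
      · show χ ⟨g₁ * g₂, h12⟩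
            = χ ⟨g₁ * γ₀⁻¹, hmem _ h1'⟩ * (-μ g₂ * (χ ⟨g₂ * γ₀⁻¹, hmem _ h2'⟩)⁻¹)
        rw [hx1, hx2, hμ₂, neg_mul_eq_mul_neg, ← h2, ← hmu]
        simp [mul_comm, mul_left_comm, mul_assoc]
      · show μ (g₁ * g₂) = -μ g₁ * -μ g₂
        rw [map_mul]
        exact (neg_mul_neg _ _).symm
      · simp
  refine ⟨MonoidHom.mk' f hmul, fun δ hδ => by simp [hf, dif_pos hδ], fun γ hγ hγ' => ?_⟩
  show f γ = _
  rw [hf]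
  simp [dif_neg hγ]
end
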